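/- arXiv:0804.0865 — 5 statements merged into one kernel-verified Lean document; each statement's English description precedes it below -/
import Mathlib

section
/- Let γ = (1+√5)/2 and E = {α ∈ ℤ[γ] : α ≥ 0}. Then every α ∈ E can be written as α = γ^(-i₁) + ⋯ + γ^(-iₛ) for some s ≥ 0 and integers 0 ≤ i₁ ≤ ⋯ ≤ iₛ (the empty sum representing 0). -/
/-!
Since `φ⁻¹ ^ 2 = 1 - φ⁻¹`, every `a + b φ⁻¹` equals `φ⁻¹ ((a + b) + a φ⁻¹)`. For a nonnegative
`a + b φ⁻¹` whose coefficients are not both nonnegative, either the new pair `(a + b, a)` is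
nonnegative or `|a + b| + |a| < |a| + |b|`; descending on `|a| + |b|` thus writes `a + b φ⁻¹` as
`φ⁻ᵏ (c + d φ⁻¹)` with `c, d ∈ ℕ`, which is visibly a sum of powers of `φ⁻¹`.
-/

open Real goldenRatio

section PowSums

variable {R : Type*} [Semiring R]

def powSums (r : R) : AddSubmonoid R :=
  AddMonoidHom.mrange (Multiset.sumAddMonoidHom.comp (Multiset.mapAddMonoidHom (r ^ ·)))

theorem mem_powSums {r x : R} : x ∈ powSums r ↔ ∃ l : Multiset ℕ, (l.map (r ^ ·)).sum = x :=
  Iff.rfl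

theorem pow_mem_powSums (r : R) (i : ℕ) : r ^ i ∈ powSums r :=
  mem_powSums.2 ⟨{i}, by simp⟩

theorem mul_mem_powSums {r x : R} (hx : x ∈ powSums r) : r * x ∈ powSums r := by
  obtain ⟨l, rfl⟩ := mem_powSums.1 hx
  refine mem_powSums.2 ⟨l.map (· + 1), ?_⟩
  simp [Multiset.map_map, pow_succ', Multiset.sum_map_mul_left]

theorem natCast_add_natCast_mul_mem_powSums (r : R) (m n : ℕ) :
    (m : R) + n * r ∈ powSums r := by
  refine add_mem ?_ ?_
  · simpa using nsmul_mem (pow_mem_powSums r 0) m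
  · simpa using nsmul_mem (pow_mem_powSums r 1) n

end PowSums

theorem Multiset.exists_monotone_sum_map {α M : Type*} [LinearOrder α] [AddCommMonoid M]
    (f : α → M) (l : Multiset α) :
    ∃ (s : ℕ) (ι : Fin s → α), Monotone ι ∧ (l.map f).sum = ∑ k, f (ι k) := by
  set L := l.sort (· ≤ ·)
  refine ⟨L.length, L.get, List.sortedLE_iff_pairwise.2 (l.pairwise_sort _), ?_⟩
  rw [← l.sort_eq (· ≤ ·), Multiset.map_coe, Multiset.sum_coe, ← List.sum_ofFn]
  congr
  exact (List.ofFn_getElem_eq_map L f).symm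

theorem inv_goldenRatio_sq : φ⁻¹ ^ 2 = 1 - φ⁻¹ := by
  rw [inv_goldenRatio, neg_sq, goldenConj_sq]
  ring

theorem intCast_add_mul_inv_goldenRatio_eq (a b : ℤ) :
    (a : ℝ) + b * φ⁻¹ = φ⁻¹ * (((a + b : ℤ) : ℝ) + a * φ⁻¹) := by
  have h := inv_goldenRatio_sq
  generalize φ⁻¹ = x at h ⊢
  push_cast
  linear_combination -(a : ℝ) * h

theorem natAbs_add_lt_natAbs_of_inv_goldenRatio {a b : ℤ} (h : 0 ≤ (a : ℝ) + b * φ⁻¹)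
    (hab : ¬(0 ≤ a ∧ 0 ≤ b)) (hba : ¬(0 ≤ a + b ∧ 0 ≤ a)) : (a + b).natAbs < b.natAbs := by
  have hpos : (0 : ℝ) < φ⁻¹ := inv_pos.2 goldenRatio_pos
  have hlt : φ⁻¹ < 1 := inv_lt_one_of_one_lt₀ one_lt_goldenRatio
  have hneg : a < 0 → 0 < a + b := by
    intro ha
    have : (a : ℝ) < 0 := by exact_mod_cast ha
    have : (0 : ℝ) < a + b := by
      nlinarith [mul_pos (neg_pos.2 this) (sub_pos.2 hlt)]
    exact_mod_cast this
  have hzero : a = 0 → 0 ≤ b := by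
    rintro rfl
    have : (0 : ℝ) ≤ b := nonneg_of_mul_nonneg_left (by simpa using h) hpos
    exact_mod_cast this
  omega

theorem intCast_add_mul_inv_goldenRatio_mem_powSums (a b : ℤ) (h : 0 ≤ (a : ℝ) + b * φ⁻¹) :
    (a : ℝ) + b * φ⁻¹ ∈ powSums φ⁻¹ := by
  by_cases hab : 0 ≤ a ∧ 0 ≤ b
  · obtain ⟨m, rfl⟩ := Int.eq_ofNat_of_zero_le hab.1
    obtain ⟨n, rfl⟩ := Int.eq_ofNat_of_zero_le hab.2
    exact_mod_cast natCast_add_natCast_mul_mem_powSums φ⁻¹ m n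
  rw [intCast_add_mul_inv_goldenRatio_eq] at h ⊢
  refine mul_mem_powSums ?_
  by_cases hba : 0 ≤ a + b ∧ 0 ≤ a
  · obtain ⟨m, hm⟩ := Int.eq_ofNat_of_zero_le hba.1
    obtain ⟨n, rfl⟩ := Int.eq_ofNat_of_zero_le hba.2
    rw [hm]
    exact_mod_cast natCast_add_natCast_mul_mem_powSums φ⁻¹ m n
  exact intCast_add_mul_inv_goldenRatio_mem_powSums (a + b) a
    (nonneg_of_mul_nonneg_right (by linarith) (inv_pos.2 goldenRatio_pos))
termination_by a.natAbs + b.natAbs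
decreasing_by
  have := natAbs_add_lt_natAbs_of_inv_goldenRatio h hab hba
  omega

theorem stmt_4 (γ : ℝ) (hγ : γ = (1 + Real.sqrt 5) / 2) :
    ∀ α : ℝ, (∃ m n : ℤ, α = (m : ℝ) + (n : ℝ) / γ) → 0 ≤ α →
      ∃ (s : ℕ) (ι : Fin s → ℕ), Monotone ι ∧
        α = ∑ k : Fin s, γ ^ (-(ι k : ℤ)) := by
  rintro α ⟨m, n, rfl⟩ hα
  obtain rfl : γ = φ := hγ
  rw [div_eq_mul_inv] at hα ⊢
  obtain ⟨l, hl⟩ := mem_powSums.1 (intCast_add_mul_inv_goldenRatio_mem_powSums m n hα)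
  obtain ⟨s, ι, hι, hsum⟩ := l.exists_monotone_sum_map (φ⁻¹ ^ ·)
  refine ⟨s, ι, hι, ?_⟩
  rw [← hl, hsum]
  simp only [zpow_neg, zpow_natCast, inv_pow]
end

section
/- Let γ = (1+√5)/2. The sets E^(+) = {m + n/γ : m,n ≥ 1 integers} and E^(i) = {m·γ^(-i) + n·γ^(-i-2) : m ≥ 1, n ≥ 0 integers} for i ≥ 0 are pairwise disjoint, and their union is E* = {α ∈ ℤ[γ] : α > 0}. -/
/-!
Write elements of `ℤ[γ]` as `m + n / γ`. Since `γ = 1 + 1 / γ`, multiplication by `γ` acts on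
coordinates as `(m, n) ↦ (m + n, m)`; the coordinates are unique because `γ` is irrational.
`E⁺` is the quadrant `m, n ≥ 1`, which this map preserves, and `γ ^ i • E⁽ⁱ⁾` is the region
`n ≤ 0 < m + n`, which it maps into the quadrant. Hence the `γ`-orbit of a positive `α` visits
that region at most once, and only before entering the quadrant: this is the disjointness.
The orbit does enter the quadrant: multiplication by `γ` scales `α` by `γ > 1` and its Galois
conjugate `α'` by `γ' ∈ (-1, 0)`, and as soon as `|α'| < α` both coordinates are positive.
The step just before entering places `α` in some `E⁽ⁱ⁾`, or in `E⁺` if there is none.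
-/

open Real goldenRatio Set Function

namespace GoldenCoords

noncomputable def evalAt (x : ℝ) (p : ℤ × ℤ) : ℝ := p.1 + p.2 / x

def mulGolden (p : ℤ × ℤ) : ℤ × ℤ := (p.1 + p.2, p.1)

def plusCoords : Set (ℤ × ℤ) := {p | 1 ≤ p.1 ∧ 1 ≤ p.2}

def baseCoords : Set (ℤ × ℤ) := {p | p.2 ≤ 0 ∧ 1 ≤ p.1 + p.2}

theorem image_evalAt_plusCoords (x : ℝ) :
    evalAt x '' plusCoords = {y | ∃ m n : ℤ, 1 ≤ m ∧ 1 ≤ n ∧ y = m + n / x} := by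
  ext y
  constructor
  · rintro ⟨⟨m, n⟩, ⟨hm, hn⟩, rfl⟩
    exact ⟨m, n, hm, hn, rfl⟩
  · rintro ⟨m, n, hm, hn, rfl⟩
    exact ⟨(m, n), ⟨hm, hn⟩, rfl⟩

theorem mem_range_evalAt {x y : ℝ} : y ∈ range (evalAt x) ↔ ∃ m n : ℤ, y = m + n / x := by
  constructor
  · rintro ⟨⟨m, n⟩, rfl⟩
    exact ⟨m, n, rfl⟩
  · rintro ⟨m, n, rfl⟩
    exact ⟨(m, n), rfl⟩

theorem preimage_image_evalAt_baseCoords {x : ℝ} (hx : x ^ 2 = x + 1) (i : ℕ) :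
    (x ^ i * ·) ⁻¹' (evalAt x '' baseCoords) =
      {y | ∃ m n : ℤ, 1 ≤ m ∧ 0 ≤ n ∧ y = m * x ^ (-(i : ℤ)) + n * x ^ (-(i : ℤ) - 2)} := by
  have hx0 : x ≠ 0 := by rintro rfl; norm_num at hx
  -- `x ^ (-2) = 1 - 1 / x`, so `m x⁻ⁱ + n x⁻ⁱ⁻² = x⁻ⁱ ((m + n) - n / x)`
  have hcoords (m n : ℤ) : x ^ i * (m * x ^ (-(i : ℤ)) + n * x ^ (-(i : ℤ) - 2)) =
      evalAt x (m + n, -n) := by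
    rw [zpow_sub₀ hx0, zpow_neg, zpow_natCast, evalAt]
    push_cast
    field_simp
    linear_combination (-(n : ℝ)) * hx
  ext y
  constructor
  · rintro ⟨⟨a, b⟩, ⟨hb, hab⟩, hy⟩
    refine ⟨a + b, -b, hab, by omega, mul_left_cancel₀ (pow_ne_zero i hx0) ?_⟩
    rw [hcoords]
    simpa using hy.symm
  · rintro ⟨m, n, hm, hn, rfl⟩
    exact ⟨(m + n, -n), ⟨by omega, by simpa using hm⟩, (hcoords m n).symm⟩

theorem evalAt_injective {x : ℝ} (hx : Irrational x) : Injective (evalAt x) := by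
  rintro ⟨a, b⟩ ⟨c, d⟩ h
  simp only [evalAt] at h
  have hbd : b = d := by
    by_contra hne
    have hirr := hx.inv.intCast_mul (sub_ne_zero.mpr hne)
    exact hirr.ne_int (c - a) (by push_cast; linear_combination h)
  subst hbd
  exact Prod.ext (by exact_mod_cast add_right_cancel h) rfl

theorem evalAt_mulGolden {x : ℝ} (hx : x ^ 2 = x + 1) (p : ℤ × ℤ) :
    evalAt x (mulGolden p) = x * evalAt x p := by
  have hinv : x⁻¹ = x - 1 := inv_eq_of_mul_eq_one_right (by linear_combination hx)
  simp only [evalAt, mulGolden, div_eq_mul_inv, hinv]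
  push_cast
  linear_combination (-(p.2 : ℝ)) * hx

theorem evalAt_iterate_mulGolden {x : ℝ} (hx : x ^ 2 = x + 1) (n : ℕ) (p : ℤ × ℤ) :
    evalAt x (mulGolden^[n] p) = x ^ n * evalAt x p := by
  induction n with
  | zero => simp
  | succ n ih => rw [iterate_succ_apply', evalAt_mulGolden hx, ih]; ring

theorem mulGolden_surjective : Surjective mulGolden :=
  fun p => ⟨(p.2, p.1 - p.2), by simp [mulGolden]⟩

theorem mapsTo_mulGolden_plusCoords : MapsTo mulGolden plusCoords plusCoords := by
  rintro ⟨a, b⟩ ⟨ha, hb⟩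
  exact ⟨by simp only [mulGolden]; omega, ha⟩

theorem mapsTo_mulGolden_baseCoords_plusCoords : MapsTo mulGolden baseCoords plusCoords := by
  rintro ⟨a, b⟩ ⟨hb, hab⟩
  exact ⟨hab, by simp only [mulGolden]; omega⟩

theorem disjoint_plusCoords_baseCoords : Disjoint plusCoords baseCoords :=
  disjoint_left.mpr fun _ hp hq => by have := hp.2; have := hq.1; omega

theorem mem_baseCoords_of_mulGolden_mem_plusCoords {p : ℤ × ℤ} (hp : p ∉ plusCoords)
    (hmul : mulGolden p ∈ plusCoords) : p ∈ baseCoords := by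
  simp only [plusCoords, mulGolden, mem_ofPred_eq] at hp hmul
  exact ⟨by omega, hmul.1⟩

theorem evalAt_pos_of_mem_plusCoords {x : ℝ} (hx : 0 < x) {p : ℤ × ℤ} (hp : p ∈ plusCoords) :
    0 < evalAt x p := by
  have h1 : (1 : ℝ) ≤ p.1 := by exact_mod_cast hp.1
  have h2 : (1 : ℝ) ≤ p.2 := by exact_mod_cast hp.2
  unfold evalAt
  positivity

theorem evalAt_pos_of_mem_baseCoords {x : ℝ} (hx0 : 0 < x) (hx : x ^ 2 = x + 1) {p : ℤ × ℤ}
    (hp : p ∈ baseCoords) : 0 < evalAt x p := by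
  have h := evalAt_pos_of_mem_plusCoords hx0 (mapsTo_mulGolden_baseCoords_plusCoords hp)
  rw [evalAt_mulGolden hx] at h
  exact pos_of_mul_pos_right h hx0.le

theorem mem_plusCoords_of_abs_lt {p : ℤ × ℤ} (h : |evalAt ψ p| < evalAt φ p) :
    p ∈ plusCoords := by
  obtain ⟨hlt, hgt⟩ := abs_lt.mp h
  have hsum : evalAt φ p + evalAt ψ p = 2 * p.1 - p.2 := by
    rw [evalAt, evalAt, div_eq_mul_inv, div_eq_mul_inv, inv_goldenRatio, inv_goldenConj]
    linear_combination (-(p.2 : ℝ)) * goldenRatio_add_goldenConj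
  have hdiff : evalAt φ p - evalAt ψ p = p.2 * √5 := by
    rw [evalAt, evalAt, div_eq_mul_inv, div_eq_mul_inv, inv_goldenRatio, inv_goldenConj]
    linear_combination (p.2 : ℝ) * goldenRatio_sub_goldenConj
  have h2 : 0 < p.2 := by
    have : (0 : ℝ) < p.2 * √5 := by linarith
    exact_mod_cast pos_of_mul_pos_left this (sqrt_nonneg 5)
  have h12 : 0 < 2 * p.1 - p.2 := by
    have : (0 : ℝ) < 2 * p.1 - p.2 := by linarith
    exact_mod_cast this
  exact ⟨by omega, h2⟩

theorem exists_iterate_mulGolden_mem_plusCoords {p : ℤ × ℤ} (hp : 0 < evalAt φ p) :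
    ∃ n, mulGolden^[n] p ∈ plusCoords := by
  obtain ⟨n, hn⟩ := pow_unbounded_of_one_lt (|evalAt ψ p| / evalAt φ p) one_lt_goldenRatio
  refine ⟨n, mem_plusCoords_of_abs_lt ?_⟩
  rw [evalAt_iterate_mulGolden goldenConj_sq, evalAt_iterate_mulGolden goldenRatio_sq, abs_mul,
    abs_pow]
  have habs : |ψ| ≤ 1 := abs_le.mpr ⟨neg_one_lt_goldenConj.le, goldenConj_neg.le.trans zero_le_one⟩
  have hψ : |ψ| ^ n ≤ 1 := pow_le_one₀ (abs_nonneg _) habs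
  calc |ψ| ^ n * |evalAt ψ p| ≤ |evalAt ψ p| := mul_le_of_le_one_left (abs_nonneg _) hψ
    _ < φ ^ n * evalAt φ p := (div_lt_iff₀ hp).mp hn

theorem exists_iterate_mulGolden_mem_baseCoords_of_not_mem_plusCoords {p : ℤ × ℤ}
    (hp : 0 < evalAt φ p) (hplus : p ∉ plusCoords) : ∃ j, mulGolden^[j] p ∈ baseCoords := by
  classical
  have hex := exists_iterate_mulGolden_mem_plusCoords hp
  obtain ⟨j, hj⟩ : ∃ j, Nat.find hex = j + 1 :=
    Nat.exists_eq_succ_of_ne_zero fun h0 => hplus (by simpa [h0] using Nat.find_spec hex)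
  have hfind := Nat.find_spec hex
  rw [hj, iterate_succ_apply'] at hfind
  exact ⟨j, mem_baseCoords_of_mulGolden_mem_plusCoords (Nat.find_min hex (by omega)) hfind⟩

theorem evalAt_ne_of_mem_plusCoords_of_mem_baseCoords {x : ℝ} (hx : Irrational x) {p q : ℤ × ℤ}
    (hp : p ∈ plusCoords) (hq : q ∈ baseCoords) : evalAt x p ≠ evalAt x q := fun h =>
  disjoint_left.mp disjoint_plusCoords_baseCoords hp (evalAt_injective hx h ▸ hq)

theorem disjoint_image_plusCoords_preimage_baseCoords (i : ℕ) :
    Disjoint (evalAt φ '' plusCoords) ((φ ^ i * ·) ⁻¹' (evalAt φ '' baseCoords)) := by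
  rw [disjoint_left]
  rintro _ ⟨p, hp, rfl⟩ ⟨q, hq, hqp : evalAt φ q = φ ^ i * evalAt φ p⟩
  rw [← evalAt_iterate_mulGolden goldenRatio_sq] at hqp
  exact evalAt_ne_of_mem_plusCoords_of_mem_baseCoords goldenRatio_irrational
    (mapsTo_mulGolden_plusCoords.iterate i hp) hq hqp.symm

theorem disjoint_preimage_baseCoords_of_lt {i j : ℕ} (hij : i < j) :
    Disjoint ((φ ^ i * ·) ⁻¹' (evalAt φ '' baseCoords))
      ((φ ^ j * ·) ⁻¹' (evalAt φ '' baseCoords)) := by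
  obtain ⟨k, rfl⟩ := Nat.exists_eq_add_of_lt hij
  rw [disjoint_left]
  rintro x ⟨p, hp, hpx : evalAt φ p = φ ^ i * x⟩ ⟨q, hq, hqx : evalAt φ q = φ ^ (i + k + 1) * x⟩
  have hplus : mulGolden^[k + 1] p ∈ plusCoords := by
    rw [iterate_succ_apply]
    exact mapsTo_mulGolden_plusCoords.iterate k (mapsTo_mulGolden_baseCoords_plusCoords hp)
  refine evalAt_ne_of_mem_plusCoords_of_mem_baseCoords goldenRatio_irrational hplus hq ?_
  rw [hqx, evalAt_iterate_mulGolden goldenRatio_sq, hpx]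
  ring

theorem image_plusCoords_union_iUnion_preimage_baseCoords :
    evalAt φ '' plusCoords ∪ ⋃ i : ℕ, (φ ^ i * ·) ⁻¹' (evalAt φ '' baseCoords) =
      {x | x ∈ range (evalAt φ) ∧ 0 < x} := by
  ext x
  simp only [mem_union, mem_iUnion, mem_preimage, mem_ofPred_eq]
  constructor
  · rintro (⟨p, hp, rfl⟩ | ⟨i, q, hq, hqx⟩)
    · exact ⟨mem_range_self p, evalAt_pos_of_mem_plusCoords goldenRatio_pos hp⟩
    · obtain ⟨p, rfl⟩ := mulGolden_surjective.iterate i q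
      have hpos := evalAt_pos_of_mem_baseCoords goldenRatio_pos goldenRatio_sq hq
      rw [evalAt_iterate_mulGolden goldenRatio_sq] at hqx hpos
      have hpx : evalAt φ p = x := mul_left_cancel₀ (pow_ne_zero i goldenRatio_ne_zero) hqx
      exact ⟨⟨p, hpx⟩, hpx ▸ pos_of_mul_pos_right hpos (pow_nonneg goldenRatio_pos.le i)⟩
  · rintro ⟨⟨p, rfl⟩, hx⟩
    by_cases hplus : p ∈ plusCoords
    · exact Or.inl ⟨p, hplus, rfl⟩
    · obtain ⟨j, hj⟩ := exists_iterate_mulGolden_mem_baseCoords_of_not_mem_plusCoords hx hplus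
      exact Or.inr ⟨j, _, hj, evalAt_iterate_mulGolden goldenRatio_sq j p⟩

end GoldenCoords

open GoldenCoords in
theorem stmt_5 (γ : ℝ) (hγ : γ = (1 + Real.sqrt 5) / 2)
    (Eplus : Set ℝ)
    (hEplus : Eplus = {x : ℝ | ∃ m n : ℤ, 1 ≤ m ∧ 1 ≤ n ∧ x = (m : ℝ) + (n : ℝ) / γ})
    (Ei : ℕ → Set ℝ)
    (hEi : ∀ i : ℕ, Ei i = {x : ℝ | ∃ m n : ℤ,
      1 ≤ m ∧ 0 ≤ n ∧ x = (m : ℝ) * γ ^ (-(i : ℤ)) + (n : ℝ) * γ ^ (-(i : ℤ) - 2)})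
    (Estar : Set ℝ)
    (hEstar : Estar = {x : ℝ | (∃ m n : ℤ, x = (m : ℝ) + (n : ℝ) / γ) ∧ 0 < x}) :
    (∀ i : ℕ, Disjoint Eplus (Ei i)) ∧
    (∀ i j : ℕ, i ≠ j → Disjoint (Ei i) (Ei j)) ∧
    (Eplus ∪ ⋃ i : ℕ, Ei i) = Estar := by
  obtain rfl : γ = φ := hγ
  obtain rfl : Ei = fun i => (φ ^ i * ·) ⁻¹' (evalAt φ '' baseCoords) :=
    funext fun i => (hEi i).trans (preimage_image_evalAt_baseCoords goldenRatio_sq i).symm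
  subst hEplus hEstar
  rw [← image_evalAt_plusCoords]
  refine ⟨disjoint_image_plusCoords_preimage_baseCoords, fun i j hij => ?_, ?_⟩
  · rcases hij.lt_or_gt with h | h
    · exact disjoint_preimage_baseCoords_of_lt h
    · exact (disjoint_preimage_baseCoords_of_lt h).symm
  · rw [image_plusCoords_union_iUnion_preimage_baseCoords]
    simp only [mem_range_evalAt]
end

section
/- Let γ = (1+√5)/2 and let α = m + n/γ with m,n ∈ ℤ, α > 0. If α = γ^(-i₁) + ⋯ + γ^(-iₛ) with integers 0 ≤ i₁ ≤ ⋯ ≤ iₛ, then Σₖ f(iₖ) ≥ |m| + |n|, with equality if iₛ ≤ 1 or if all iₖ have the same parity. -/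
/-!
For every integer `k`, `φ ^ k = fib (k + 1) + fib k * φ⁻¹` with the two-sided Fibonacci numbers,
so by irrationality of `φ` the coordinates of `α` are `m = ∑ fib (1 - iₖ)` and `n = ∑ fib (-iₖ)`.
Since `|fib (1 - i)| + |fib (-i)| = fib (i - 1) + fib i = f i`, the triangle inequality gives the
bound. The sign of `fib (-j)` is `(-1) ^ (j + 1)`, so when all `iₖ` have the same parity (or
`iₖ ≤ 1`, where the offending terms vanish) each coordinate sums terms of one sign and the
triangle inequality is an equality.
-/

open Real Finset
open scoped goldenRatio

namespace Int

theorem abs_fib_neg (n : ℤ) : |fib (-n)| = |fib n| := by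
  rw [fib_neg]; split_ifs <;> simp

theorem fib_nonneg_of_neg_one_le {n : ℤ} (hn : -1 ≤ n) : 0 ≤ fib n := by
  obtain rfl | hn := hn.eq_or_lt
  · simp
  · rw [fib_of_nonneg (by omega)]; positivity

theorem fib_nonneg_of_odd {n : ℤ} (hn : Odd n) : 0 ≤ fib n := by
  rw [fib_of_odd hn]; positivity

theorem fib_nonpos_of_even_of_nonpos {n : ℤ} (he : Even n) (hn : n ≤ 0) : fib n ≤ 0 := by
  have h := fib_neg (-n)
  rw [neg_neg, if_pos he.neg, fib_of_nonneg (n := -n) (by omega)] at h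
  omega

theorem abs_fib_neg_add_one_add_abs_fib_neg (i : ℕ) :
    |fib (-i + 1)| + |fib (-i)| = fib (i + 1) := by
  have h := fib_add_two ((i : ℤ) - 1)
  rw [show -(i : ℤ) + 1 = -((i : ℤ) - 1) by ring, abs_fib_neg, abs_fib_neg,
    abs_of_nonneg (fib_nonneg_of_neg_one_le (by omega)),
    abs_of_nonneg (fib_nonneg_of_neg_one_le (by omega))]
  rw [show (i : ℤ) - 1 + 2 = i + 1 by ring, show (i : ℤ) - 1 + 1 = i by ring] at h
  exact h.symm

theorem fib_neg_add_one_nonneg_and_fib_neg_nonneg {i : ℕ} (hi : i ≤ 1) :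
    0 ≤ fib (-i + 1) ∧ 0 ≤ fib (-i) := by
  interval_cases i <;> simp

theorem fib_neg_add_one_nonneg_and_fib_neg_nonpos {i : ℕ} (hi : Even i) :
    0 ≤ fib (-i + 1) ∧ fib (-i) ≤ 0 := by
  have hi : Even (i : ℤ) := by exact_mod_cast hi
  exact ⟨fib_nonneg_of_odd (hi.neg.add_one), fib_nonpos_of_even_of_nonpos hi.neg (by omega)⟩

theorem fib_neg_add_one_nonpos_and_fib_neg_nonneg {i : ℕ} (hi : Odd i) :
    fib (-i + 1) ≤ 0 ∧ 0 ≤ fib (-i) := by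
  have hpos := hi.pos
  have hi : Odd (i : ℤ) := by exact_mod_cast hi
  exact ⟨fib_nonpos_of_even_of_nonpos (hi.neg.add_one) (by omega), fib_nonneg_of_odd hi.neg⟩

theorem eq_fib_add_one_of_rec {f : ℤ → ℤ} (hf0 : f 0 = 1) (hf1 : f 1 = 1)
    (hrec : ∀ i : ℤ, f (i + 2) = f (i + 1) + f i) (n : ℕ) : f n = fib (n + 1) := by
  induction n using Nat.twoStepInduction with
  | zero => simpa using hf0
  | one => simpa using hf1
  | more n ih₀ ih₁ =>
    push_cast at *
    rw [hrec, ih₀, ih₁, show (n : ℤ) + 2 + 1 = n + 1 + 2 by ring, fib_add_two]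
    ring_nf

end Int

namespace Real

theorem goldenRatio_zpow (k : ℤ) : φ ^ k = Int.fib (k + 1) + Int.fib k * φ⁻¹ := by
  rw [coe_intFib_eq, coe_intFib_eq, inv_goldenRatio, zpow_add_one₀ goldenRatio_ne_zero,
    zpow_add_one₀ goldenConj_ne_zero, ← goldenRatio_sub_goldenConj]
  have : φ - ψ ≠ 0 := by rw [goldenRatio_sub_goldenConj]; positivity
  field_simp
  ring

theorem intCast_add_intCast_mul_goldenRatio_inv_inj {a b c d : ℤ}
    (h : (a : ℝ) + b * φ⁻¹ = c + d * φ⁻¹) : a = c ∧ b = d := by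
  have hbd : b = d := by
    by_contra hne
    have hirr := goldenRatio_irrational.inv.intCast_mul (sub_ne_zero.mpr hne)
    exact hirr.ne_int (c - a) (by push_cast; linear_combination h)
  subst hbd
  exact ⟨by exact_mod_cast add_right_cancel h, rfl⟩

theorem sum_goldenRatio_zpow {α : Type*} (s : Finset α) (e : α → ℤ) :
    ∑ k ∈ s, φ ^ e k =
      ((∑ k ∈ s, Int.fib (e k + 1) : ℤ) : ℝ) + ((∑ k ∈ s, Int.fib (e k) : ℤ) : ℝ) * φ⁻¹ := by
  simp only [goldenRatio_zpow, sum_add_distrib, ← sum_mul, Int.cast_sum]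

end Real

theorem Finset.abs_sum_eq_sum_abs {ι G : Type*} [AddCommGroup G] [LinearOrder G]
    [IsOrderedAddMonoid G] {s : Finset ι} {a : ι → G}
    (h : (∀ i ∈ s, 0 ≤ a i) ∨ (∀ i ∈ s, a i ≤ 0)) : |∑ i ∈ s, a i| = ∑ i ∈ s, |a i| := by
  rcases h with h | h
  · rw [abs_of_nonneg (sum_nonneg h)]
    exact sum_congr rfl fun i hi => (abs_of_nonneg (h i hi)).symm
  · rw [abs_of_nonpos (sum_nonpos h), ← sum_neg_distrib]
    exact sum_congr rfl fun i hi => (abs_of_nonpos (h i hi)).symm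

theorem Nat.forall_even_or_forall_odd {α : Type*} {e : α → ℕ}
    (h : ∀ k l, (e k : ℤ) % 2 = (e l : ℤ) % 2) : (∀ k, Even (e k)) ∨ ∀ k, Odd (e k) := by
  by_cases he : ∃ k, Even (e k)
  · obtain ⟨k₀, hk₀⟩ := he
    refine .inl fun k => ?_
    have := h k k₀
    rw [Nat.even_iff] at hk₀ ⊢
    omega
  · exact .inr fun k => Nat.not_even_iff_odd.mp fun hk => he ⟨k, hk⟩

theorem abs_sum_fib_neg_eq_sum_abs {α : Type*} [Fintype α] {e : α → ℕ}
    (h : (∀ k, e k ≤ 1) ∨ (∀ k, Even (e k)) ∨ ∀ k, Odd (e k)) :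
    |∑ k, Int.fib (-e k + 1)| = ∑ k, |Int.fib (-e k + 1)| ∧
      |∑ k, Int.fib (-e k)| = ∑ k, |Int.fib (-e k)| := by
  have hsign : ((∀ k ∈ univ, 0 ≤ Int.fib (-e k + 1)) ∨ ∀ k ∈ univ, Int.fib (-e k + 1) ≤ 0) ∧
      ((∀ k ∈ univ, 0 ≤ Int.fib (-e k)) ∨ ∀ k ∈ univ, Int.fib (-e k) ≤ 0) := by
    rcases h with h | h | h
    · exact ⟨.inl fun k _ => (Int.fib_neg_add_one_nonneg_and_fib_neg_nonneg (h k)).1,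
        .inl fun k _ => (Int.fib_neg_add_one_nonneg_and_fib_neg_nonneg (h k)).2⟩
    · exact ⟨.inl fun k _ => (Int.fib_neg_add_one_nonneg_and_fib_neg_nonpos (h k)).1,
        .inr fun k _ => (Int.fib_neg_add_one_nonneg_and_fib_neg_nonpos (h k)).2⟩
    · exact ⟨.inr fun k _ => (Int.fib_neg_add_one_nonpos_and_fib_neg_nonneg (h k)).1,
        .inl fun k _ => (Int.fib_neg_add_one_nonpos_and_fib_neg_nonneg (h k)).2⟩
  exact ⟨abs_sum_eq_sum_abs hsign.1, abs_sum_eq_sum_abs hsign.2⟩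

theorem stmt_6_general (f : ℤ → ℤ) (hf0 : f 0 = 1) (hf1 : f 1 = 1)
    (hrec : ∀ i : ℤ, f (i + 2) = f (i + 1) + f i)
    (γ : ℝ) (hγ : γ = (1 + Real.sqrt 5) / 2)
    (m n : ℤ)
    (s : ℕ) (ι : Fin s → ℕ)
    (hrep : (m : ℝ) + (n : ℝ) / γ = ∑ k : Fin s, γ ^ (-(ι k : ℤ))) :
    |m| + |n| ≤ ∑ k : Fin s, f (ι k) ∧
    ((∀ k, ι k ≤ 1) ∨ (∀ k l, (ι k : ℤ) % 2 = (ι l : ℤ) % 2) →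
      ∑ k : Fin s, f (ι k) = |m| + |n|) := by
  rw [← goldenRatio] at hγ
  subst hγ
  rw [div_eq_mul_inv, sum_goldenRatio_zpow] at hrep
  obtain ⟨rfl, rfl⟩ := intCast_add_intCast_mul_goldenRatio_inv_inj hrep
  have hdeg : ∑ k, f (ι k) = ∑ k, |Int.fib (-ι k + 1)| + ∑ k, |Int.fib (-ι k)| := by
    rw [← sum_add_distrib]
    exact sum_congr rfl fun k _ => by
      rw [Int.eq_fib_add_one_of_rec hf0 hf1 hrec, Int.abs_fib_neg_add_one_add_abs_fib_neg]
  rw [hdeg]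
  refine ⟨add_le_add (abs_sum_le_sum_abs _ _) (abs_sum_le_sum_abs _ _), fun h => ?_⟩
  obtain ⟨hm, hn⟩ := abs_sum_fib_neg_eq_sum_abs (h.imp_right Nat.forall_even_or_forall_odd)
  rw [hm, hn]

theorem stmt_6 (f : ℤ → ℤ) (hf0 : f 0 = 1) (hf1 : f 1 = 1)
    (hrec : ∀ i : ℤ, f (i + 2) = f (i + 1) + f i)
    (γ : ℝ) (hγ : γ = (1 + Real.sqrt 5) / 2)
    (m n : ℤ) (hpos : 0 < (m : ℝ) + (n : ℝ) / γ)
    (s : ℕ) (ι : Fin s → ℕ) (hmono : Monotone ι)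
    (hrep : (m : ℝ) + (n : ℝ) / γ = ∑ k : Fin s, γ ^ (-(ι k : ℤ))) :
    |m| + |n| ≤ ∑ k : Fin s, f (ι k) ∧
    ((∀ k, ι k ≤ 1) ∨ (∀ k l, (ι k : ℤ) % 2 = (ι l : ℤ) % 2) →
      ∑ k : Fin s, f (ι k) = |m| + |n|) :=
  stmt_6_general f hf0 hf1 hrec γ hγ m n s ι hrep
end

section
/- Let γ = (1+√5)/2 and let α = m + n/γ with m,n ∈ ℤ, α > 0. If α = γ^(-i₁) + ⋯ + γ^(-iₛ) with 0 ≤ i₁ ≤ ⋯ ≤ iₛ, then Σₖ f(iₖ−2) ≥ |m| and Σₖ f(iₖ−1) ≥ |n|. -/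
/-! With `x = γ⁻¹ = -ψ` one has `x ^ 2 = 1 - x`, and induction on `i` gives
`x ^ i = (-1) ^ i f(i - 2) + (-1) ^ (i + 1) f(i - 1) x`. Summing over the representation of `α`
and comparing coefficients (`x` is irrational) writes `m` and `n` as alternating sums of the
nonnegative numbers `f(iₖ - 2)` and `f(iₖ - 1)`; the triangle inequality concludes. -/

open Finset Real
open scoped goldenRatio

theorem Irrational.intCast_add_intCast_mul_inj {x : ℝ} (hx : Irrational x) {a b c d : ℤ}
    (h : (a : ℝ) + b * x = c + d * x) : a = c ∧ b = d := by
  have hbd : b = d := by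
    by_contra hne
    exact (hx.intCast_mul (sub_ne_zero.mpr hne)).ne_int (c - a) (by push_cast; linarith)
  subst hbd
  exact ⟨by exact_mod_cast add_right_cancel h, rfl⟩

theorem abs_sum_neg_one_pow_mul_le {ι R : Type*} [Ring R] [LinearOrder R] [IsStrictOrderedRing R]
    (s : Finset ι) (e : ι → ℕ) {g : ι → R} (hg : ∀ i ∈ s, 0 ≤ g i) :
    |∑ i ∈ s, (-1) ^ e i * g i| ≤ ∑ i ∈ s, g i :=
  (abs_sum_le_sum_abs _ _).trans_eq <| sum_congr rfl fun i hi => by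
    rw [abs_mul, abs_pow, abs_neg, abs_one, one_pow, one_mul, abs_of_nonneg (hg i hi)]

section TwoSidedRecurrence

variable {f : ℤ → ℤ}

theorem apply_neg_one_eq_zero (hrec : ∀ i : ℤ, f (i + 2) = f (i + 1) + f i)
    (hf0 : f 0 = 1) (hf1 : f 1 = 1) : f (-1) = 0 := by
  have := hrec (-1)
  norm_num at this
  omega

theorem apply_neg_two_eq_one (hrec : ∀ i : ℤ, f (i + 2) = f (i + 1) + f i)
    (hf0 : f 0 = 1) (hm1 : f (-1) = 0) : f (-2) = 1 := by
  have := hrec (-2)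
  norm_num at this
  omega

theorem apply_nonneg_of_neg_two_le (hrec : ∀ i : ℤ, f (i + 2) = f (i + 1) + f i)
    (hm2 : 0 ≤ f (-2)) (hm1 : 0 ≤ f (-1)) {i : ℤ} (hi : -2 ≤ i) : 0 ≤ f i := by
  suffices 0 ≤ f i ∧ 0 ≤ f (i + 1) from this.1
  induction i, hi using Int.leInduction with
  | base => exact ⟨hm2, hm1⟩
  | succ j _ ih =>
    refine ⟨ih.2, ?_⟩
    rw [add_assoc, one_add_one_eq_two, hrec]
    exact add_nonneg ih.2 ih.1

theorem pow_eq_of_sq_eq_one_sub {R : Type*} [CommRing R] {x : R} (hx : x ^ 2 = 1 - x)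
    (hrec : ∀ i : ℤ, f (i + 2) = f (i + 1) + f i) (hm2 : f (-2) = 1) (hm1 : f (-1) = 0)
    (i : ℕ) : x ^ i = (-1) ^ i * f (i - 2) + (-1) ^ (i + 1) * f (i - 1) * x := by
  induction i with
  | zero => simp [hm2, hm1]
  | succ i ih =>
    have hi : f i = f (i - 1) + f (i - 2) := by
      have := hrec (i - 2)
      rwa [sub_add_cancel, show (i : ℤ) - 2 + 1 = i - 1 by ring] at this
    rw [Nat.cast_succ, show (i : ℤ) + 1 - 2 = i - 1 by ring, add_sub_cancel_right, pow_succ, ih,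
      hi]
    push_cast
    linear_combination (-1) ^ (i + 1) * (f (i - 1) : R) * hx

theorem sum_pow_eq_of_sq_eq_one_sub {R ι : Type*} [CommRing R] {x : R} (hx : x ^ 2 = 1 - x)
    (hrec : ∀ i : ℤ, f (i + 2) = f (i + 1) + f i) (hm2 : f (-2) = 1) (hm1 : f (-1) = 0)
    (s : Finset ι) (e : ι → ℕ) :
    ∑ k ∈ s, x ^ e k = ((∑ k ∈ s, (-1) ^ e k * f (e k - 2) : ℤ) : R)
      + ((∑ k ∈ s, (-1) ^ (e k + 1) * f (e k - 1) : ℤ) : R) * x := by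
  push_cast
  rw [sum_mul, ← sum_add_distrib]
  exact sum_congr rfl fun k _ => pow_eq_of_sq_eq_one_sub hx hrec hm2 hm1 (e k)

end TwoSidedRecurrence

theorem stmt_7_general (f : ℤ → ℤ) (hf0 : f 0 = 1) (hf1 : f 1 = 1)
    (hrec : ∀ i : ℤ, f (i + 2) = f (i + 1) + f i)
    (γ : ℝ) (hγ : γ = (1 + Real.sqrt 5) / 2)
    (m n : ℤ)
    (s : ℕ) (ι : Fin s → ℕ)
    (hrep : (m : ℝ) + (n : ℝ) / γ = ∑ k : Fin s, γ ^ (-(ι k : ℤ))) :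
    |m| ≤ ∑ k : Fin s, f ((ι k : ℤ) - 2) ∧ |n| ≤ ∑ k : Fin s, f ((ι k : ℤ) - 1) := by
  have hm1 := apply_neg_one_eq_zero hrec hf0 hf1
  have hm2 := apply_neg_two_eq_one hrec hf0 hm1
  have hnonneg (i : ℕ) (j : ℤ) (hj : j ≤ 2) : 0 ≤ f (i - j) :=
    apply_nonneg_of_neg_two_le hrec (hm2 ▸ zero_le_one) hm1.ge (by omega)
  have hx : (-ψ) ^ 2 = 1 - -ψ := by rw [neg_sq, goldenConj_sq]; ring
  have hγ' : γ⁻¹ = -ψ := hγ ▸ inv_goldenRatio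
  simp only [zpow_neg, zpow_natCast, ← inv_pow, div_eq_mul_inv] at hrep
  rw [hγ', sum_pow_eq_of_sq_eq_one_sub hx hrec hm2 hm1] at hrep
  obtain ⟨rfl, rfl⟩ := goldenConj_irrational.neg.intCast_add_intCast_mul_inj hrep
  exact ⟨abs_sum_neg_one_pow_mul_le _ _ fun k _ => hnonneg _ 2 le_rfl,
    abs_sum_neg_one_pow_mul_le _ _ fun k _ => hnonneg _ 1 (by norm_num)⟩

theorem stmt_7 (f : ℤ → ℤ) (hf0 : f 0 = 1) (hf1 : f 1 = 1)
    (hrec : ∀ i : ℤ, f (i + 2) = f (i + 1) + f i)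
    (γ : ℝ) (hγ : γ = (1 + Real.sqrt 5) / 2)
    (m n : ℤ) (hpos : 0 < (m : ℝ) + (n : ℝ) / γ)
    (s : ℕ) (ι : Fin s → ℕ) (hmono : Monotone ι)
    (hrep : (m : ℝ) + (n : ℝ) / γ = ∑ k : Fin s, γ ^ (-(ι k : ℤ))) :
    |m| ≤ ∑ k : Fin s, f ((ι k : ℤ) - 2) ∧ |n| ≤ ∑ k : Fin s, f ((ι k : ℤ) - 1) :=
  stmt_7_general f hf0 hf1 hrec γ hγ m n s ι hrep
end

section
/- Let ℚ[X₀,X₁,X₂,X₀*,X₁*,X₂*] be a polynomial ring, and let a₁₁,a₁₂,a₂₁,a₂₂ ∈ ℤ with a₁₁a₂₂ − a₁₂a₂₁ = 1, and let M = (aᵢⱼ). Define Φ = a₁₁(X₀*X₁ − X₁*X₀) + a₁₂(X₁*X₁ − X₂*X₀) + a₂₁(X₀*X₂ − X₁*X₁) + a₂₂(X₁*X₂ − X₂*X₁). If M is neither symmetric nor skew-symmetric, then the polynomials X₀X₂ − X₁², X₀*X₂* − (X₁*)², and Φ form a regular sequence in ℚ[X₀,X₁,X₂,X₀*,X₁*,X₂*].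 -/
open Polynomial in
lemma ker_eval2_sqrt {C D : Type*} [CommRing C] [CommRing D] [Nontrivial C]
    (τ : C →+* D) (σ : D →+* D) (hστ : ∀ c, σ (τ c) = τ c)
    (w : D) (hw : σ w = -w) (d : C) (hd : τ d = w ^ 2)
    (h2 : ∀ x : D, x + x = 0 → x = 0)
    (hwreg : ∀ x : D, w * x = 0 → x = 0) :
    RingHom.ker (Polynomial.eval₂RingHom τ w) =
      Ideal.span {(Polynomial.X : C[X]) ^ 2 - Polynomial.C d}
        ⊔ Ideal.map (Polynomial.C : C →+* C[X]) (RingHom.ker τ) := by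
  have hm : (X ^ 2 - Polynomial.C d : C[X]).Monic := monic_X_pow_sub_C d (by norm_num)
  apply le_antisymm
  · intro p hp
    have hp0 : Polynomial.eval₂ τ w p = 0 := hp
    have hsplit := p.modByMonic_add_div (X ^ 2 - Polynomial.C d)
    set r := p %ₘ (X ^ 2 - Polynomial.C d) with hr
    have hdeg : r.degree ≤ 1 := by
      have h2' : r.degree < 2 := by
        have := degree_modByMonic_lt p hm
        rwa [degree_X_pow_sub_C (by norm_num) d] at this
      rcases hdd : r.degree with _ | n
      · exact bot_le
      · rw [hdd] at h2'
        change ((n : ℕ) : WithBot ℕ) < 2 at h2'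
        have hn : n < 2 := by exact_mod_cast h2'
        have hn1 : n ≤ 1 := Nat.lt_succ_iff.mp hn
        show ((n : ℕ) : WithBot ℕ) ≤ 1
        exact_mod_cast hn1
    have hrform : r = Polynomial.C (r.coeff 1) * X + Polynomial.C (r.coeff 0) :=
      eq_X_add_C_of_degree_le_one hdeg
    have heval : τ (r.coeff 1) * w + τ (r.coeff 0) = 0 := by
      have h := congrArg (Polynomial.eval₂ τ w) hsplit
      rw [hp0, eval₂_add, eval₂_mul, eval₂_sub, eval₂_pow, eval₂_X, eval₂_C, ← hd,
        sub_self, zero_mul, add_zero, hrform, eval₂_add, eval₂_mul, eval₂_C, eval₂_X,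
        eval₂_C] at h
      exact h
    have heval2 : τ (r.coeff 1) * (-w) + τ (r.coeff 0) = 0 := by
      have := congrArg σ heval
      rwa [map_add, map_mul, hστ, hστ, hw, map_zero] at this
    have hc0 : τ (r.coeff 0) = 0 := by
      apply h2
      have := congrArg₂ (· + ·) heval heval2
      have h' : (τ (r.coeff 1) * w + τ (r.coeff 0)) + (τ (r.coeff 1) * (-w) + τ (r.coeff 0)) = 0 := by
        rw [heval, heval2, add_zero]
      linear_combination h'
    have hc1 : τ (r.coeff 1) = 0 := by
      apply hwreg
      have : τ (r.coeff 1) * w = 0 := by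
        have := heval; rwa [hc0, add_zero] at this
      linear_combination this
    have hmem1 : (X ^ 2 - Polynomial.C d : C[X]) * (p /ₘ (X ^ 2 - Polynomial.C d)) ∈
        Ideal.span {(X : C[X]) ^ 2 - Polynomial.C d} :=
      Ideal.mul_mem_right _ _ (Ideal.subset_span rfl)
    have hmemr : r ∈ Ideal.map (Polynomial.C : C →+* C[X]) (RingHom.ker τ) := by
      rw [hrform]
      exact add_mem (Ideal.mul_mem_right _ _ (Ideal.mem_map_of_mem _ hc1))
        (Ideal.mem_map_of_mem _ hc0)
    rw [← hsplit]
    exact add_mem (Ideal.mem_sup_right hmemr) (Ideal.mem_sup_left hmem1)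
  · apply sup_le
    · rw [Ideal.span_le]
      intro x hx
      rw [Set.mem_singleton_iff] at hx
      subst hx
      show Polynomial.eval₂ τ w _ = 0
      rw [eval₂_sub, eval₂_pow, eval₂_X, eval₂_C, ← hd, sub_self]
    · rw [Ideal.map_le_iff_le_comap]
      intro c hc
      show Polynomial.eval₂ τ w _ = 0
      rw [eval₂_C]
      exact hc

open MvPolynomial in
lemma aeval_sq_injective {k n : ℕ} (hk : 0 < k) (g : Fin k → Fin n) (hg : Function.Injective g) :
    Function.Injective
      (MvPolynomial.aeval (R := ℚ) (fun i : Fin k => (X (g i) : MvPolynomial (Fin n) ℚ) ^ 2)) := by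
  have : Nonempty (Fin k) := ⟨⟨0, hk⟩⟩
  set F := fun i : Fin k => (X (g i) : MvPolynomial (Fin n) ℚ) ^ 2 with hF
  rw [injective_iff_map_eq_zero]
  intro p hp
  set K := AlgebraicClosure ℚ
  -- square root function on K
  have hsq : ∀ x : K, ∃ y : K, y ^ 2 = x := fun x =>
    IsAlgClosed.exists_pow_nat_eq x (by norm_num)
  choose rt hrt using hsq
  have key : ∀ z : Fin k → K, aeval z p = 0 := by
    intro z
    have happ := congrArg (aeval (R := ℚ) (fun j : Fin n => rt (z (Function.invFun g j)))) hp
    rw [map_zero] at happ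
    rw [show (aeval (R := ℚ) fun j : Fin n => rt (z (Function.invFun g j)))
        ((aeval (R := ℚ) F) p)
        = aeval (fun i : Fin k =>
            (aeval (R := ℚ) fun j : Fin n => rt (z (Function.invFun g j))) (F i)) p by
      rw [← MvPolynomial.comp_aeval_apply]] at happ
    have hfun : (fun i : Fin k =>
        (aeval (R := ℚ) fun j : Fin n => rt (z (Function.invFun g j))) (F i)) = z := by
      funext i
      rw [hF]
      simp only [map_pow, aeval_X]
      rw [Function.leftInverse_invFun hg i, hrt]
    rwa [hfun] at happ
  have hmap : MvPolynomial.map (algebraMap ℚ K) p = 0 := by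
    apply MvPolynomial.funext
    intro x
    rw [map_zero, eval_map, ← aeval_def]
    exact key x
  exact MvPolynomial.map_injective (σ := Fin k) (algebraMap ℚ K) (algebraMap ℚ K).injective
    (by rw [hmap, map_zero])


open MvPolynomial

noncomputable section Aux17

abbrev R6 : Type := MvPolynomial (Fin 6) ℚ
abbrev B5 : Type := MvPolynomial (Fin 5) ℚ
abbrev B4 : Type := MvPolynomial (Fin 4) ℚ

@[simp] lemma vec6_four {α : Type*} (a b c d e f : α) : ![a,b,c,d,e,f] 4 = e := rfl
@[simp] lemma vec6_five {α : Type*} (a b c d e f : α) : ![a,b,c,d,e,f] 5 = f := rfl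
@[simp] lemma vec5_four {α : Type*} (a b c d e : α) : ![a,b,c,d,e] 4 = e := rfl

def g5 : Fin 5 → Fin 6 := ![0,1,3,4,5]
def g4 : Fin 4 → Fin 6 := ![0,1,3,4]
def τ5 : B5 →ₐ[ℚ] R6 := aeval (fun i => X (g5 i) ^ 2)
def τ4 : B4 →ₐ[ℚ] R6 := aeval (fun i => X (g4 i) ^ 2)
def σ0 : R6 →ₐ[ℚ] R6 := aeval (fun j => if j = 0 then -X 0 else X j)
def σ3 : R6 →ₐ[ℚ] R6 := aeval (fun j => if j = 3 then -X 3 else X j)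

lemma hστ5 : ∀ c : B5, σ0 (τ5 c) = τ5 c := by
  have : σ0.comp τ5 = τ5 := by
    apply algHom_ext
    intro i
    fin_cases i <;> simp [σ0, τ5, g5]
  exact fun c => AlgHom.congr_fun this c

lemma hστ4' : ∀ c : B4, σ0 (τ4 c) = τ4 c := by
  have : σ0.comp τ4 = τ4 := by
    apply algHom_ext
    intro i
    fin_cases i <;> simp [σ0, τ4, g4]
  exact fun c => AlgHom.congr_fun this c

lemma hστ43 : ∀ c : B4, σ3 (τ4 c) = τ4 c := by
  have : σ3.comp τ4 = τ4 := by
    apply algHom_ext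
    intro i
    fin_cases i <;> simp [σ3, τ4, g4]
  exact fun c => AlgHom.congr_fun this c

lemma h2R6 : ∀ x : R6, x + x = 0 → x = 0 := by
  intro x hx
  have h : (2 : R6) * x = 0 := by rw [two_mul]; exact hx
  rcases mul_eq_zero.mp h with h' | h'
  · exfalso
    have := congrArg (eval (fun _ => (0:ℚ))) h'
    rw [map_ofNat, map_zero] at this
    norm_num at this
  · exact h'

lemma ne_zero_of_eval_one {p : R6} (h : eval (fun _ => (1:ℚ)) p = 1) : p ≠ 0 := by
  intro h0
  rw [h0, map_zero] at h
  norm_num at h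

lemma X01_ne : (X 0 * X 1 : R6) ≠ 0 := ne_zero_of_eval_one (by simp)
lemma X34_ne : (X 3 * X 4 : R6) ≠ 0 := ne_zero_of_eval_one (by simp)

lemma hwreg01 : ∀ x : R6, (X 0 * X 1) * x = 0 → x = 0 := by
  intro x hx
  rcases mul_eq_zero.mp hx with h | h
  · exact absurd h X01_ne
  · exact h

lemma hwreg34 : ∀ x : R6, (X 3 * X 4) * x = 0 → x = 0 := by
  intro x hx
  rcases mul_eq_zero.mp hx with h | h
  · exact absurd h X34_ne
  · exact h

lemma σ0w : σ0 (X 0 * X 1 : R6) = -(X 0 * X 1) := by simp [σ0]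
lemma σ3w : σ3 (X 3 * X 4 : R6) = -(X 3 * X 4) := by simp [σ3]
lemma σ3w01 : σ3 (X 0 * X 1 : R6) = X 0 * X 1 := by simp [σ3]

def θ1 : Polynomial B5 →+* R6 := Polynomial.eval₂RingHom τ5.toRingHom (X 0 * X 1)
def θin : Polynomial B4 →+* R6 := Polynomial.eval₂RingHom τ4.toRingHom (X 0 * X 1)
def θout : Polynomial (Polynomial B4) →+* R6 := Polynomial.eval₂RingHom θin (X 3 * X 4)

lemma τ5_inj : Function.Injective τ5 :=
  aeval_sq_injective (by norm_num) g5 (by decide)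

lemma τ4_inj : Function.Injective τ4 :=
  aeval_sq_injective (by norm_num) g4 (by decide)

lemma ker_θ1 : RingHom.ker θ1 =
    Ideal.span {(Polynomial.X : Polynomial B5) ^ 2 - Polynomial.C (X 0 * X 1 : B5)} := by
  have h := ker_eval2_sqrt τ5.toRingHom σ0.toRingHom hστ5 (X 0 * X 1 : R6) σ0w
    (X 0 * X 1 : B5) (by simp [τ5, g5]; ring) h2R6 hwreg01
  have hkτ : RingHom.ker τ5.toRingHom = ⊥ :=
    (RingHom.injective_iff_ker_eq_bot _).mp τ5_inj
  rw [hkτ, Ideal.map_bot, sup_bot_eq] at h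
  exact h

lemma ker_θin : RingHom.ker θin =
    Ideal.span {(Polynomial.X : Polynomial B4) ^ 2 - Polynomial.C (X 0 * X 1 : B4)} := by
  have h := ker_eval2_sqrt τ4.toRingHom σ0.toRingHom hστ4' (X 0 * X 1 : R6) σ0w
    (X 0 * X 1 : B4) (by simp [τ4, g4]; ring) h2R6 hwreg01
  have hkτ : RingHom.ker τ4.toRingHom = ⊥ :=
    (RingHom.injective_iff_ker_eq_bot _).mp τ4_inj
  rw [hkτ, Ideal.map_bot, sup_bot_eq] at h
  exact h

lemma hστout : ∀ c : Polynomial B4, σ3.toRingHom (θin c) = θin c := by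
  have : (σ3.toRingHom.comp θin) = θin := by
    apply Polynomial.ringHom_ext
    · intro a
      simp only [RingHom.comp_apply]
      rw [show θin (Polynomial.C a) = τ4 a from Polynomial.eval₂_C _ _]
      exact hστ43 a
    · simp only [RingHom.comp_apply]
      rw [show θin Polynomial.X = X 0 * X 1 from Polynomial.eval₂_X _ _]
      exact σ3w01
  exact fun c => RingHom.congr_fun this c

lemma ker_θout : RingHom.ker θout =
    Ideal.span {(Polynomial.X : Polynomial (Polynomial B4)) ^ 2
        - Polynomial.C (Polynomial.C (X 2 * X 3 : B4)),
      Polynomial.C ((Polynomial.X : Polynomial B4) ^ 2 - Polynomial.C (X 0 * X 1 : B4))} := by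
  have h := ker_eval2_sqrt θin σ3.toRingHom hστout (X 3 * X 4 : R6) σ3w
    (Polynomial.C (X 2 * X 3 : B4))
    (by rw [show θin (Polynomial.C (X 2 * X 3 : B4)) = τ4 (X 2 * X 3) from Polynomial.eval₂_C _ _]
        simp [τ4, g4]; ring)
    h2R6 hwreg34
  rw [ker_θin, Ideal.map_span, Set.image_singleton] at h
  rw [show RingHom.ker θout = RingHom.ker (Polynomial.eval₂RingHom θin (X 3 * X 4)) from rfl, h,
    ← Ideal.span_insert]

def f1 : R6 := X 0 * X 2 - X 1 ^ 2
def f2 : R6 := X 3 * X 5 - X 4 ^ 2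

def G1 : R6 →ₐ[ℚ] Polynomial B5 :=
  aeval ![Polynomial.C (X 0), Polynomial.X, Polynomial.C (X 1), Polynomial.C (X 2),
    Polynomial.C (X 3), Polynomial.C (X 4)]

def G2 : R6 →ₐ[ℚ] Polynomial (Polynomial B4) :=
  aeval ![Polynomial.C (Polynomial.C (X 0)), Polynomial.C Polynomial.X,
    Polynomial.C (Polynomial.C (X 1)), Polynomial.C (Polynomial.C (X 2)),
    Polynomial.X, Polynomial.C (Polynomial.C (X 3))]

def U1 : Polynomial B5 →+* R6 :=
  Polynomial.eval₂RingHom (aeval (R := ℚ) ![X 0, X 2, X 3, X 4, X 5]).toRingHom (X 1)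

def U2 : Polynomial (Polynomial B4) →+* R6 :=
  Polynomial.eval₂RingHom
    (Polynomial.eval₂RingHom (aeval (R := ℚ) ![X 0, X 2, X 3, X 5]).toRingHom (X 1)) (X 4)

lemma U1_G1 : ∀ p : R6, U1 (G1 p) = p := by
  have : U1.comp G1.toRingHom = RingHom.id R6 := by
    apply MvPolynomial.ringHom_ext
    · intro r
      simp [U1, G1]
    · intro i
      fin_cases i <;> simp [U1, G1]
  exact fun p => RingHom.congr_fun this p

lemma U2_G2 : ∀ p : R6, U2 (G2 p) = p := by
  have : U2.comp G2.toRingHom = RingHom.id R6 := by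
    apply MvPolynomial.ringHom_ext
    · intro r
      simp [U2, G2]
    · intro i
      fin_cases i <;> simp [U2, G2]
  exact fun p => RingHom.congr_fun this p

lemma span_f1_eq : Ideal.span {f1} = RingHom.ker (θ1.comp G1.toRingHom) := by
  apply le_antisymm
  · rw [Ideal.span_le]
    intro x hx
    rw [Set.mem_singleton_iff] at hx
    subst hx
    show θ1 (G1 f1) = 0
    simp only [f1, map_sub, map_mul, map_pow, G1, aeval_X, Matrix.cons_val_zero,
      Matrix.cons_val_one, Matrix.head_cons, Matrix.cons_val_two, Matrix.tail_cons,
      θ1, Polynomial.coe_eval₂RingHom, Polynomial.eval₂_mul, Polynomial.eval₂_sub,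
      Polynomial.eval₂_pow, Polynomial.eval₂_C, Polynomial.eval₂_X]
    simp only [τ5, AlgHom.toRingHom_eq_coe, RingHom.coe_coe, aeval_X, g5,
      Matrix.cons_val_zero, Matrix.cons_val_one, Matrix.head_cons]
    ring
  · intro p hp
    have hker : G1 p ∈ RingHom.ker θ1 := hp
    rw [ker_θ1, Ideal.mem_span_singleton] at hker
    obtain ⟨q, hq⟩ := hker
    have hU : p = U1 (G1 p) := (U1_G1 p).symm
    rw [hq, map_mul] at hU
    have hUm : U1 ((Polynomial.X : Polynomial B5) ^ 2 - Polynomial.C (X 0 * X 1 : B5))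
        = -f1 := by
      simp only [U1, Polynomial.coe_eval₂RingHom, Polynomial.eval₂_sub, Polynomial.eval₂_pow,
        Polynomial.eval₂_X, Polynomial.eval₂_C, Polynomial.eval₂_mul, AlgHom.toRingHom_eq_coe,
        RingHom.coe_coe, map_mul, aeval_X, Matrix.cons_val_zero, Matrix.cons_val_one, Matrix.head_cons, f1]
      ring
    rw [hUm] at hU
    rw [Ideal.mem_span_singleton]
    exact ⟨-(U1 q), by rw [hU]; ring⟩

lemma span_f12_eq : Ideal.span {f1, f2} = RingHom.ker (θout.comp G2.toRingHom) := by
  apply le_antisymm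
  · rw [Ideal.span_le]
    intro x hx
    rcases hx with hx | hx
    · subst hx
      show θout (G2 f1) = 0
      simp only [f1, map_sub, map_mul, map_pow, G2, aeval_X, Matrix.cons_val_zero,
        Matrix.cons_val_one, Matrix.head_cons, Matrix.cons_val_two, Matrix.tail_cons,
        θout, θin, Polynomial.coe_eval₂RingHom, Polynomial.eval₂_mul, Polynomial.eval₂_sub,
        Polynomial.eval₂_pow, Polynomial.eval₂_C, Polynomial.eval₂_X]
      simp only [τ4, AlgHom.toRingHom_eq_coe, RingHom.coe_coe, aeval_X, g4,
        Matrix.cons_val_zero, Matrix.cons_val_one, Matrix.head_cons]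
      ring
    · rw [Set.mem_singleton_iff] at hx
      subst hx
      show θout (G2 f2) = 0
      simp only [f2, map_sub, map_mul, map_pow, G2, aeval_X, Matrix.cons_val_zero,
        Matrix.cons_val_one, Matrix.head_cons, Matrix.cons_val_two, Matrix.tail_cons,
        Matrix.cons_val_three, vec6_four, vec6_five,
        θout, θin, Polynomial.coe_eval₂RingHom, Polynomial.eval₂_mul, Polynomial.eval₂_sub,
        Polynomial.eval₂_pow, Polynomial.eval₂_C, Polynomial.eval₂_X]
      simp only [τ4, AlgHom.toRingHom_eq_coe, RingHom.coe_coe, aeval_X, g4,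
        Matrix.cons_val_zero, Matrix.cons_val_one, Matrix.head_cons, Matrix.cons_val_two,
        Matrix.tail_cons, Matrix.cons_val_three]
      ring
  · intro p hp
    have hker : G2 p ∈ RingHom.ker θout := hp
    rw [ker_θout] at hker
    have hmem : U2 (G2 p) ∈ Ideal.map U2 (Ideal.span
        {(Polynomial.X : Polynomial (Polynomial B4)) ^ 2
            - Polynomial.C (Polynomial.C (X 2 * X 3 : B4)),
          Polynomial.C ((Polynomial.X : Polynomial B4) ^ 2 - Polynomial.C (X 0 * X 1 : B4))}) :=
      Ideal.mem_map_of_mem _ hker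
    rw [Ideal.map_span] at hmem
    rw [← U2_G2 p]
    refine Ideal.span_le.mpr ?_ hmem
    intro x hx
    simp only [Set.image_insert_eq, Set.image_singleton, Set.mem_insert_iff,
      Set.mem_singleton_iff] at hx
    have hA : U2 ((Polynomial.X : Polynomial (Polynomial B4)) ^ 2
        - Polynomial.C (Polynomial.C (X 2 * X 3 : B4))) = -f2 := by
      simp only [U2, Polynomial.coe_eval₂RingHom, Polynomial.eval₂_sub, Polynomial.eval₂_pow,
        Polynomial.eval₂_X, Polynomial.eval₂_C, Polynomial.eval₂_mul, AlgHom.toRingHom_eq_coe,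
        RingHom.coe_coe, map_mul, aeval_X, Matrix.cons_val_zero, Matrix.cons_val_one, Matrix.head_cons,
        Matrix.cons_val_two, Matrix.tail_cons, Matrix.cons_val_three, f2]
      ring
    have hB : U2 (Polynomial.C ((Polynomial.X : Polynomial B4) ^ 2
        - Polynomial.C (X 0 * X 1 : B4))) = -f1 := by
      simp only [U2, Polynomial.coe_eval₂RingHom, Polynomial.eval₂_sub, Polynomial.eval₂_pow,
        Polynomial.eval₂_X, Polynomial.eval₂_C, Polynomial.eval₂_mul, AlgHom.toRingHom_eq_coe,
        RingHom.coe_coe, map_mul, aeval_X, Matrix.cons_val_zero, Matrix.cons_val_one, Matrix.head_cons, f1]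
      ring
    rcases hx with hx | hx
    · rw [hx, hA]
      exact neg_mem (Ideal.subset_span (by simp))
    · rw [hx, hB]
      exact neg_mem (Ideal.subset_span (by simp))

lemma prime_f1 : (Ideal.span {f1}).IsPrime := by
  rw [span_f1_eq]
  exact RingHom.ker_isPrime _

lemma prime_f12 : (Ideal.span {f1, f2}).IsPrime := by
  rw [span_f12_eq]
  exact RingHom.ker_isPrime _

lemma f1_ne : f1 ≠ 0 := by
  intro h
  have := congrArg (eval (fun j : Fin 6 => if j = 1 then (0:ℚ) else 1)) h
  simp [f1] at this

lemma f2_not_mem : f2 ∉ Ideal.span {f1} := by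
  rw [span_f1_eq]
  intro h
  have h0 : θ1 (G1 f2) = 0 := h
  have hh := congrArg (eval (fun j : Fin 6 => if j = 4 then (0:ℚ) else 1)) h0
  rw [map_zero] at hh
  simp [θ1, G1, f2, τ5, g5, Polynomial.eval₂_pow, Polynomial.eval₂_mul, Polynomial.eval₂_sub, Polynomial.eval₂_add, Polynomial.eval₂_C, Polynomial.eval₂_X, Polynomial.coe_eval₂RingHom, Polynomial.algebraMap_apply, MvPolynomial.algebraMap_eq] at hh

lemma f3_not_mem (a11 a12 a21 a22 : ℤ) (hdet : a11 * a22 - a12 * a21 = 1) :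
    (C (a11 : ℚ) * (X 3 * X 1 - X 4 * X 0) + C (a12 : ℚ) * (X 4 * X 1 - X 5 * X 0)
      + C (a21 : ℚ) * (X 3 * X 2 - X 4 * X 1)
      + C (a22 : ℚ) * (X 4 * X 2 - X 5 * X 1) : R6) ∉ Ideal.span {f1, f2} := by
  rw [span_f12_eq]
  intro h
  have h0 : θout (G2 (C (a11 : ℚ) * (X 3 * X 1 - X 4 * X 0)
      + C (a12 : ℚ) * (X 4 * X 1 - X 5 * X 0)
      + C (a21 : ℚ) * (X 3 * X 2 - X 4 * X 1)
      + C (a22 : ℚ) * (X 4 * X 2 - X 5 * X 1))) = 0 := h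
  have h1 := congrArg (eval (![1, 1, 0, 1, 0, 0] : Fin 6 → ℚ)) h0
  have h2 := congrArg (eval (![1, -1, 0, 1, 0, 0] : Fin 6 → ℚ)) h0
  rw [map_zero] at h1 h2
  simp only [map_add, map_sub, map_mul, map_pow, G2, aeval_X, aeval_C,
    Matrix.cons_val_zero, Matrix.cons_val_one, Matrix.head_cons, Matrix.cons_val_two,
    Matrix.tail_cons, Matrix.cons_val_three, vec6_four, vec6_five,
    Polynomial.algebraMap_apply, MvPolynomial.algebraMap_eq,
    θout, θin, Polynomial.coe_eval₂RingHom, Polynomial.eval₂_add, Polynomial.eval₂_sub,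
    Polynomial.eval₂_mul, Polynomial.eval₂_pow, Polynomial.eval₂_C, Polynomial.eval₂_X,
    τ4, AlgHom.toRingHom_eq_coe, RingHom.coe_coe, g4, eval_X, eval_C] at h1 h2
  norm_num at h1 h2
  have ha11 : (a11 : ℚ) = 0 := by linarith
  have ha21 : (a21 : ℚ) = 0 := by linarith
  have ha11' : a11 = 0 := by exact_mod_cast ha11
  have ha21' : a21 = 0 := by exact_mod_cast ha21
  rw [ha11', ha21'] at hdet
  simp at hdet

lemma isSMulRegular_quot {I : Ideal R6} {f : R6}
    (h : ∀ g : R6, f * g ∈ I → g ∈ I) :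
    IsSMulRegular (R6 ⧸ (I • ⊤ : Submodule R6 R6)) f := by
  have hI : (I • ⊤ : Submodule R6 R6) = I := by
    rw [Ideal.smul_eq_mul, Ideal.mul_top]
  intro a b hab
  obtain ⟨x, rfl⟩ := Submodule.Quotient.mk_surjective _ a
  obtain ⟨y, rfl⟩ := Submodule.Quotient.mk_surjective _ b
  have hab' : Submodule.Quotient.mk (f • x) = (Submodule.Quotient.mk (f • y) :
      R6 ⧸ (I • ⊤ : Submodule R6 R6)) := by
    rw [Submodule.Quotient.mk_smul, Submodule.Quotient.mk_smul]
    exact hab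
  rw [Submodule.Quotient.eq, hI] at hab'
  rw [Submodule.Quotient.eq, hI]
  have : f * (x - y) ∈ I := by
    have : f • x - f • y = f * (x - y) := by rw [smul_eq_mul, smul_eq_mul]; ring
    rwa [this] at hab'
  exact h _ this

lemma ofList_pair_eq : Ideal.ofList [f1, f2] = Ideal.span {f1, f2} := by
  unfold Ideal.ofList
  congr 1
  ext x
  simp

lemma ofList_single_eq : Ideal.ofList [f1] = Ideal.span {f1} := by
  unfold Ideal.ofList
  congr 1
  ext x
  simp

end Aux17

open MvPolynomial in
theorem stmt_17 (a11 a12 a21 a22 : ℤ)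
    (hdet : a11 * a22 - a12 * a21 = 1)
    (hsym : a12 ≠ a21)
    (hskew : ¬(a11 = 0 ∧ a22 = 0 ∧ a12 = -a21)) :
    RingTheory.Sequence.IsRegular (MvPolynomial (Fin 6) ℚ)
      [(X 0 * X 2 - X 1 ^ 2 : MvPolynomial (Fin 6) ℚ),
       X 3 * X 5 - X 4 ^ 2,
       C (a11 : ℚ) * (X 3 * X 1 - X 4 * X 0) + C (a12 : ℚ) * (X 4 * X 1 - X 5 * X 0)
         + C (a21 : ℚ) * (X 3 * X 2 - X 4 * X 1)
         + C (a22 : ℚ) * (X 4 * X 2 - X 5 * X 1)] := by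
  set f3 : R6 := C (a11 : ℚ) * (X 3 * X 1 - X 4 * X 0) + C (a12 : ℚ) * (X 4 * X 1 - X 5 * X 0)
         + C (a21 : ℚ) * (X 3 * X 2 - X 4 * X 1)
         + C (a22 : ℚ) * (X 4 * X 2 - X 5 * X 1) with hf3
  refine ⟨⟨?_⟩, ?_⟩
  · intro i hi
    simp only [List.length_cons, List.length_nil] at hi
    interval_cases i
    · show IsSMulRegular (R6 ⧸ (Ideal.ofList [] • ⊤ : Submodule R6 R6)) f1
      apply isSMulRegular_quot
      intro g hg
      rw [Ideal.ofList_nil, Ideal.mem_bot] at hg ⊢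
      rcases mul_eq_zero.mp hg with h | h
      · exact absurd h f1_ne
      · exact h
    · show IsSMulRegular (R6 ⧸ (Ideal.ofList [f1] • ⊤ : Submodule R6 R6)) f2
      apply isSMulRegular_quot
      intro g hg
      rw [ofList_single_eq] at hg ⊢
      rcases prime_f1.mem_or_mem hg with h | h
      · exact absurd h f2_not_mem
      · exact h
    · show IsSMulRegular (R6 ⧸ (Ideal.ofList [f1, f2] • ⊤ : Submodule R6 R6)) f3
      apply isSMulRegular_quot
      intro g hg
      rw [ofList_pair_eq] at hg ⊢
      rcases prime_f12.mem_or_mem hg with h | h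
      · exact absurd h (f3_not_mem a11 a12 a21 a22 hdet)
      · exact h
  · rw [Ideal.smul_eq_mul, Ideal.mul_top]
    intro htop
    have h1 : (1 : R6) ∈ Ideal.ofList [(X 0 * X 2 - X 1 ^ 2 : R6), X 3 * X 5 - X 4 ^ 2, f3] := by
      rw [← htop]; trivial
    have hle : Ideal.ofList [(X 0 * X 2 - X 1 ^ 2 : R6), X 3 * X 5 - X 4 ^ 2, f3] ≤
        RingHom.ker (eval (fun _ => (0:ℚ)) : R6 →+* ℚ) := by
      rw [Ideal.span_le]
      intro x hx
      simp only [List.mem_cons, List.not_mem_nil, or_false, Set.mem_setOf_eq] at hx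
      rcases hx with rfl | rfl | rfl <;>
        · show eval (fun _ => (0:ℚ)) _ = 0
          simp [hf3]
    have := hle h1
    rw [RingHom.mem_ker, map_one] at this
    norm_num at this
end
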